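/- For every s ∈ S, left multiplication by b(C_s) = H_s - v⁻¹ is self-adjoint with respect to the form ⟨·,·⟩: ⟨b(C_s) H, H'⟩ = ⟨H, b(C_s) H'⟩ for all H, H'. -/

import Mathlib

open LaurentPolynomial

/-- Membership in `v ℤ[v] ⊆ ℤ[v,v⁻¹]`. -/
def IsVPol (p : LaurentPolynomial ℤ) : Prop :=
  ∃ q : Polynomial ℤ, p = Polynomial.toLaurent q * T 1

/-- The coefficient of `v` in a Laurent polynomial. -/
def muCoeff (p : LaurentPolynomial ℤ) : ℤ := p.coeff 1

variable {B W : Type*} [Group W] {M : CoxeterMatrix B}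

/-- The Bruhat order `≤` on `W`: generated by right multiplication by reflections which
increases the length. -/
def BruhatLE (cs : CoxeterSystem M W) : W → W → Prop :=
  Relation.ReflTransGen
    (fun a b => (∃ t, cs.IsReflection t ∧ b = a * t) ∧ cs.length a < cs.length b)

/-- The strict Bruhat order on `W`. -/
def BruhatLT (cs : CoxeterSystem M W) (x y : W) : Prop :=
  BruhatLE cs x y ∧ x ≠ y

/-- The Hecke algebra of a Coxeter system, axiomatized: a `ℤ[v,v⁻¹]`-algebra with a basis
`T_x` indexed by `W` satisfying the braid and quadratic relations. -/
structure HeckeAlg (cs : CoxeterSystem M W) (A : Type*) [Ring A]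
    [Algebra (LaurentPolynomial ℤ) A] where
  Tb : Module.Basis W (LaurentPolynomial ℤ) A
  Tb_one : Tb 1 = 1
  Tb_mul : ∀ x y : W, cs.length (x * y) = cs.length x + cs.length y →
    Tb x * Tb y = Tb (x * y)
  Tb_quadratic : ∀ i : B, (Tb (cs.simple i) + 1) *
    (Tb (cs.simple i) - algebraMap (LaurentPolynomial ℤ) A (T (-2))) = 0

namespace HeckeAlg

variable {cs : CoxeterSystem M W} {A : Type*} [Ring A] [Algebra (LaurentPolynomial ℤ) A]

/-- The standard basis element `H_x = v^{ℓ(x)} T_x`. -/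
noncomputable def H (ha : HeckeAlg cs A) (x : W) : A :=
  algebraMap (LaurentPolynomial ℤ) A (T (cs.length x : ℤ)) * ha.Tb x

/-- The element `C_s = H_s + v` for a simple reflection `s`. -/
noncomputable def Cs (ha : HeckeAlg cs A) (i : B) : A :=
  ha.H (cs.simple i) + algebraMap (LaurentPolynomial ℤ) A (T 1)

/-- Data of the bar involution `d` on the Hecke algebra: a ring endomorphism with
`d(v) = v⁻¹` and `d(H_x) = (H_{x⁻¹})⁻¹`. -/
structure Bar (ha : HeckeAlg cs A) where
  d : A →+* A
  d_scalar : ∀ n : ℤ, d (algebraMap (LaurentPolynomial ℤ) A (T n)) =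
    algebraMap (LaurentPolynomial ℤ) A (T (-n))
  d_H_mul : ∀ x : W, d (ha.H x) * ha.H x⁻¹ = 1
  d_H_mul' : ∀ x : W, ha.H x⁻¹ * d (ha.H x) = 1

/-- `c` is a Kazhdan–Lusztig basis element at `x`: bar-invariant and congruent to `H_x`
modulo `∑_y v ℤ[v] H_y`. -/
def IsKL (ha : HeckeAlg cs A) (bar : ha.Bar) (x : W) (c : A) : Prop :=
  bar.d c = c ∧ ∃ f : W →₀ LaurentPolynomial ℤ, (∀ y, IsVPol (f y)) ∧
    c = ha.H x + f.sum fun y r => r • ha.H y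

end HeckeAlg

open scoped Classical
open HeckeAlg

/-!
In the basis `(H_x)`, which is orthonormal for `⟨·,·⟩`, the operator `b(C_s)` acts by
`H_x ↦ H_{sx} - ε_x H_x` with `ε_x ∈ {v, v⁻¹}`, by the quadratic relation
`H_s² = 1 + (v⁻¹ - v) H_s`.
As `x ↦ sx` is an involution, its matrix `δ_{sx,y} - ε_x δ_{x,y}` is symmetric.
-/

namespace LinearMap

theorem isAdjointPair_of_basis {ι R M N : Type*} [CommSemiring R] [AddCommMonoid M]
    [Module R M] [AddCommMonoid N] [Module R N] (b : Module.Basis ι R M)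
    {B : M →ₗ[R] M →ₗ[R] N} {f g : M →ₗ[R] M}
    (h : ∀ i j, B (f (b i)) (b j) = B (b i) (g (b j))) :
    IsAdjointPair B B f g :=
  isAdjointPair_iff_comp_eq_compl₂.2 <| ext_basis b b h

theorem isAdjointPair_of_apply_basis_eq_sub_smul {ι R M : Type*} [CommRing R] [AddCommGroup M]
    [Module R M] (b : Module.Basis ι R M)
    {B : M →ₗ[R] M →ₗ[R] R} (hB : ∀ i j, B (b i) (b j) = if i = j then 1 else 0)
    {f : M →ₗ[R] M} {σ : ι → ι} (hσ : Function.Involutive σ) (ε : ι → R)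
    (hf : ∀ i, f (b i) = b (σ i) - ε i • b i) :
    IsAdjointPair B B f f := by
  refine isAdjointPair_of_basis b fun i j => ?_
  have hσij : σ i = j ↔ i = σ j :=
    ⟨by rintro rfl; exact (hσ i).symm, by rintro rfl; exact hσ j⟩
  rw [hf, hf, map_sub, map_sub, sub_apply, map_smul, map_smul, smul_apply, hB, hB, hB]
  by_cases hij : i = j
  · subst hij; simp only [hσij]
  · simp only [hσij, hij, if_false, smul_zero]

end LinearMap

namespace HeckeAlg

variable {B W : Type*} [Group W] {M : CoxeterMatrix B} {cs : CoxeterSystem M W}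
  {A : Type*} [Ring A] [Algebra (LaurentPolynomial ℤ) A] (ha : HeckeAlg cs A)

theorem H_eq_smul (x : W) : ha.H x = (T (cs.length x : ℤ) : LaurentPolynomial ℤ) • ha.Tb x :=
  (Algebra.smul_def _ _).symm

noncomputable def hBasis : Module.Basis W (LaurentPolynomial ℤ) A :=
  ha.Tb.unitsSMul fun x => (isUnit_T (cs.length x : ℤ)).unit

@[simp]
theorem hBasis_apply (x : W) : ha.hBasis x = ha.H x := by
  rw [hBasis, Module.Basis.unitsSMul_apply, Units.smul_def, IsUnit.unit_spec, H_eq_smul]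

theorem H_mul_H {x y : W} (h : cs.length (x * y) = cs.length x + cs.length y) :
    ha.H x * ha.H y = ha.H (x * y) := by
  rw [H_eq_smul, H_eq_smul, H_eq_smul, smul_mul_smul_comm, ← T_add, ha.Tb_mul x y h, h]
  push_cast
  rfl

theorem H_simple_mul_self (i : B) :
    ha.H (cs.simple i) * ha.H (cs.simple i) =
      1 + (T (-1) - T 1 : LaurentPolynomial ℤ) • ha.H (cs.simple i) := by
  have h := ha.Tb_quadratic i
  simp only [Algebra.algebraMap_eq_smul_one, add_mul, mul_sub, mul_smul_comm, mul_one,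
    one_mul] at h
  rw [H_eq_smul, cs.length_simple, smul_mul_smul_comm]
  have h₁ : (T 1 * T 1 * T (-2) : LaurentPolynomial ℤ) = 1 := by simp only [← T_add]; rfl
  have h₂ : (T (-1) * T 1 : LaurentPolynomial ℤ) = 1 := by simp only [← T_add]; rfl
  push_cast
  linear_combination (norm := module) (T 1 * T 1 : LaurentPolynomial ℤ) • h +
    h₁ • (ha.Tb (cs.simple i) + 1) - h₂ • ha.Tb (cs.simple i)

theorem H_simple_mul_of_not_isLeftDescent {i : B} {x : W} (h : ¬cs.IsLeftDescent x i) :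
    ha.H (cs.simple i) * ha.H x = ha.H (cs.simple i * x) :=
  ha.H_mul_H <| by rw [cs.not_isLeftDescent_iff.1 h, cs.length_simple, add_comm]

theorem H_simple_mul_of_isLeftDescent {i : B} {x : W} (h : cs.IsLeftDescent x i) :
    ha.H (cs.simple i) * ha.H x =
      ha.H (cs.simple i * x) + (T (-1) - T 1 : LaurentPolynomial ℤ) • ha.H x := by
  have hx : ha.H x = ha.H (cs.simple i) * ha.H (cs.simple i * x) := by
    rw [ha.H_simple_mul_of_not_isLeftDescent (cs.isLeftDescent_iff_not_isLeftDescent_mul.1 h),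
      cs.simple_mul_simple_cancel_left]
  rw [hx, ← mul_assoc, H_simple_mul_self, add_mul, one_mul, smul_mul_assoc]

/-- `bCs` stands for `b(C_s) = H_s - v⁻¹`. -/
theorem bCs_mul_H (i : B) (x : W) :
    (ha.H (cs.simple i) - algebraMap (LaurentPolynomial ℤ) A (T (-1))) * ha.H x =
      ha.H (cs.simple i * x) -
        (if cs.IsLeftDescent x i then T 1 else T (-1) : LaurentPolynomial ℤ) • ha.H x := by
  rw [sub_mul, ← Algebra.smul_def]
  by_cases h : cs.IsLeftDescent x i
  · rw [ha.H_simple_mul_of_isLeftDescent h, if_pos h]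
    module
  · rw [ha.H_simple_mul_of_not_isLeftDescent h, if_neg h]

end HeckeAlg

/-- left multiplication by `b(C_s) = H_s - v⁻¹` is self-adjoint for the
form `⟨H_x, H_y⟩ = δ_{x,y}`. -/
theorem stmt13 {B W : Type*} [Group W] {M : CoxeterMatrix B} (cs : CoxeterSystem M W)
    (A : Type*) [Ring A] [Algebra (LaurentPolynomial ℤ) A] (ha : HeckeAlg cs A)
    (Bf : A →ₗ[LaurentPolynomial ℤ] A →ₗ[LaurentPolynomial ℤ] LaurentPolynomial ℤ)
    (hBf : ∀ x y : W, Bf (ha.H x) (ha.H y) = if x = y then 1 else 0)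
    (i : B) (a a' : A) :
    Bf ((ha.H (cs.simple i) - algebraMap (LaurentPolynomial ℤ) A (T (-1))) * a) a' =
      Bf a ((ha.H (cs.simple i) - algebraMap (LaurentPolynomial ℤ) A (T (-1))) * a') :=
  LinearMap.isAdjointPair_of_apply_basis_eq_sub_smul ha.hBasis (by simpa only [hBasis_apply])
    (f := LinearMap.mulLeft _ _) (fun _ => cs.simple_mul_simple_cancel_left i) _
    (by simpa only [hBasis_apply, LinearMap.mulLeft_apply] using ha.bCs_mul_H i) a a'
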